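/- Let n be a positive integer and let x, y be symmetric n×n complex matrices (xᵀ = x, yᵀ = y) such that I − x xᴴ and I − xᴴ x are (Hermitian) positive definite and I − xᴴ y is invertible. Set z = φ_x(y) = (I − x xᴴ)^{−1/2} (y − x) (I − xᴴ y)^{−1} (I − xᴴ x)^{1/2}, and assume I + xᴴ z is invertible. Then y = (I − x xᴴ)^{−1/2} (z + x) (I + xᴴ z)^{−1} (I − xᴴ x)^{1/2}; that is, φ_{−x}(φ_x(y)) = y, where φ_{−x}(w) = (I − x xᴴ)^{−1/2} (w + x) (I + xᴴ w)^{−1} (I − xᴴ x)^{1/2}. -/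

import Mathlib

open Matrix
open scoped ComplexOrder

namespace Matrix.PosSemidef

/-- The positive semidefinite square root of a positive semidefinite matrix
(as defined in Mathlib of December 2024; removed from Mathlib since). -/
noncomputable def sqrt {n 𝕜 : Type*} [Fintype n] [RCLike 𝕜] [DecidableEq n]
    {A : Matrix n n 𝕜} (hA : A.PosSemidef) : Matrix n n 𝕜 :=
  hA.1.eigenvectorUnitary.1 * diagonal ((↑) ∘ Real.sqrt ∘ hA.1.eigenvalues) *
  (star hA.1.eigenvectorUnitary : Matrix n n 𝕜)

end Matrix.PosSemidef

/-!
Write `A = (1 - x xᴴ)^{1/2}` and `B = (1 - xᴴ x)^{1/2}`. The relation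
`(1 - x xᴴ) x = x (1 - xᴴ x)` passes to square roots (on the finite spectrum the square root is a
polynomial), so `A x = x B` and `B xᴴ = xᴴ A`. With `z = φ_x(y)` and `W = 1 - xᴴ y` these give
`z + x = A y W⁻¹ B` and `1 + xᴴ z = B W⁻¹ B`, and in `φ_{-x}(z) = A⁻¹ (z + x) (1 + xᴴ z)⁻¹ B`
everything but `y` cancels.
-/

open Polynomial in
theorem SemiconjBy.aeval {R A : Type*} [CommSemiring R] [Semiring A] [Algebra R A] {x a b : A}
    (h : SemiconjBy x a b) (p : R[X]) : SemiconjBy x (aeval a p) (aeval b p) := by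
  induction p using Polynomial.induction_on' with
  | add p q hp hq => simpa only [map_add] using hp.add_right hq
  | monomial k c =>
    simpa only [aeval_monomial] using
      SemiconjBy.mul_right (Algebra.commutes c x).symm (h.pow_right k)

-- On a finite spectrum every function agrees with a polynomial, and polynomials preserve
-- semiconjugacy.
theorem SemiconjBy.cfc_of_finite_spectrum {A : Type*} [Ring A] [StarRing A] [Algebra ℝ A]
    [TopologicalSpace A] [IsTopologicalRing A] [ContinuousFunctionalCalculus ℝ A IsSelfAdjoint]
    {x a b : A} (ha : IsSelfAdjoint a) (hb : IsSelfAdjoint b)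
    (ha' : (spectrum ℝ a).Finite) (hb' : (spectrum ℝ b).Finite)
    (h : SemiconjBy x a b) (f : ℝ → ℝ) : SemiconjBy x (cfc f a) (cfc f b) := by
  let s := (ha'.union hb').toFinset
  let p := Lagrange.interpolate s id f
  have hcfc : ∀ c : A, IsSelfAdjoint c → spectrum ℝ c ⊆ s → cfc f c = Polynomial.aeval c p := by
    intro c hc hcs
    rw [← cfc_polynomial p c]
    exact cfc_congr fun t ht =>
      (Lagrange.eval_interpolate_at_node f (Set.injOn_id _) (hcs ht)).symm
  rw [hcfc a ha (by simp [s]), hcfc b hb (by simp [s])]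
  exact SemiconjBy.aeval h p

namespace Matrix.PosSemidef

variable {n 𝕜 : Type*} [Fintype n] [RCLike 𝕜] [DecidableEq n] {A : Matrix n n 𝕜}

theorem sqrt_eq_cfc (hA : A.PosSemidef) : hA.sqrt = cfc Real.sqrt A := by
  rw [hA.1.cfc_eq, IsHermitian.cfc, Unitary.conjStarAlgAut_apply, sqrt]

theorem sqrt_mul_self (hA : A.PosSemidef) : hA.sqrt * hA.sqrt = A := by
  conv_rhs => rw [← cfc_id' ℝ A hA.1]
  rw [sqrt_eq_cfc, ← cfc_mul ..]
  refine cfc_congr fun t ht => Real.mul_self_sqrt ?_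
  obtain ⟨i, rfl⟩ := hA.1.spectrum_real_eq_range_eigenvalues ▸ ht
  exact hA.eigenvalues_nonneg i

theorem sqrt_mul_eq_mul_sqrt {B X : Matrix n n 𝕜} (hA : A.PosSemidef) (hB : B.PosSemidef)
    (h : A * X = X * B) : hA.sqrt * X = X * hB.sqrt := by
  rw [sqrt_eq_cfc, sqrt_eq_cfc]
  exact (SemiconjBy.cfc_of_finite_spectrum hB.1 hA.1 finite_real_spectrum
    finite_real_spectrum h.symm _).symm

end Matrix.PosSemidef

theorem Matrix.PosDef.isUnit_sqrt {n 𝕜 : Type*} [Fintype n] [RCLike 𝕜] [DecidableEq n]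
    {A : Matrix n n 𝕜} (hA : A.PosDef) : IsUnit hA.posSemidef.sqrt :=
  isUnit_of_mul_isUnit_left (hA.posSemidef.sqrt_mul_self ▸ hA.isUnit)

open scoped Ring

section SiegelMap

variable {R : Type*} [Ring R]

-- The paper's `φ_x(y)`, for `A = (1 - x xᴴ)^{1/2}`, `B = (1 - xᴴ x)^{1/2}` and `u = xᴴ`.
noncomputable def siegelMap (A B x u y : R) : R := A⁻¹ʳ * (y - x) * (1 - u * y)⁻¹ʳ * B

variable {A B x u y : R}

theorem siegelMap_add_eq (hA : IsUnit A) (hAA : A * A = 1 - x * u) (hAx : A * x = x * B)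
    (hW : IsUnit (1 - u * y)) :
    siegelMap A B x u y + x = A * y * (1 - u * y)⁻¹ʳ * B := by
  have hx : x = A⁻¹ʳ * (x * (1 - u * y)) * (1 - u * y)⁻¹ʳ * B := by
    rw [← mul_assoc, Ring.mul_inverse_cancel_right _ _ hW, mul_assoc, ← hAx,
      Ring.inverse_mul_cancel_left _ _ hA]
  calc siegelMap A B x u y + x
      = A⁻¹ʳ * (y - x) * (1 - u * y)⁻¹ʳ * B
        + A⁻¹ʳ * (x * (1 - u * y)) * (1 - u * y)⁻¹ʳ * B := by rw [siegelMap, ← hx]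
    _ = A⁻¹ʳ * ((y - x) + x * (1 - u * y)) * (1 - u * y)⁻¹ʳ * B := by noncomm_ring
    _ = A⁻¹ʳ * (A * A * y) * (1 - u * y)⁻¹ʳ * B := by rw [hAA]; noncomm_ring
    _ = A * y * (1 - u * y)⁻¹ʳ * B := by rw [mul_assoc A, Ring.inverse_mul_cancel_left _ _ hA]

theorem one_add_mul_siegelMap (hA : IsUnit A) (hB : IsUnit B) (hBB : B * B = 1 - u * x)
    (hBu : B * u = u * A) (hW : IsUnit (1 - u * y)) :
    1 + u * siegelMap A B x u y = B * (1 - u * y)⁻¹ʳ * B := by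
  have hu : u * A⁻¹ʳ = B⁻¹ʳ * u := by
    rw [← Ring.inverse_mul_cancel_left _ (u * A⁻¹ʳ) hB, ← mul_assoc B, hBu, mul_assoc,
      Ring.mul_inverse_cancel _ hA, mul_one]
  have h1 : (1 : R) = B⁻¹ʳ * (1 - u * y) * (1 - u * y)⁻¹ʳ * B := by
    rw [Ring.mul_inverse_cancel_right _ _ hW, Ring.inverse_mul_cancel _ hB]
  calc 1 + u * siegelMap A B x u y
      = B⁻¹ʳ * (1 - u * y) * (1 - u * y)⁻¹ʳ * B
        + B⁻¹ʳ * (u * (y - x)) * (1 - u * y)⁻¹ʳ * B := by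
        rw [← h1, siegelMap, ← mul_assoc, ← mul_assoc, ← mul_assoc, hu]; noncomm_ring
    _ = B⁻¹ʳ * ((1 - u * y) + u * (y - x)) * (1 - u * y)⁻¹ʳ * B := by noncomm_ring
    _ = B⁻¹ʳ * (B * B) * (1 - u * y)⁻¹ʳ * B := by rw [hBB]; noncomm_ring
    _ = B * (1 - u * y)⁻¹ʳ * B := by rw [Ring.inverse_mul_cancel_left _ _ hB]

theorem siegelMap_neg_siegelMap (hA : IsUnit A) (hB : IsUnit B) (hAA : A * A = 1 - x * u)
    (hBB : B * B = 1 - u * x) (hAx : A * x = x * B) (hBu : B * u = u * A)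
    (hW : IsUnit (1 - u * y)) :
    siegelMap A B (-x) (-u) (siegelMap A B x u y) = y := by
  set z := siegelMap A B x u y
  have hV : 1 + u * z = B * (1 - u * y)⁻¹ʳ * B := one_add_mul_siegelMap hA hB hBB hBu hW
  have hVu : IsUnit (1 + u * z) := hV ▸ (hB.mul hW.ringInverse).mul hB
  have hzx : z + x = A * y * B⁻¹ʳ * (1 + u * z) := by
    rw [siegelMap_add_eq hA hAA hAx hW, hV, mul_assoc _ B⁻¹ʳ, ← mul_assoc B⁻¹ʳ, ← mul_assoc B⁻¹ʳ,
      Ring.inverse_mul_cancel _ hB, one_mul, mul_assoc (A * y)]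
  rw [siegelMap, sub_neg_eq_add, neg_mul, sub_neg_eq_add, hzx]
  simp only [mul_assoc]
  rw [Ring.inverse_mul_cancel_left _ _ hA, Ring.mul_inverse_cancel_left _ _ hVu,
    Ring.inverse_mul_cancel _ hB, mul_one]

end SiegelMap

theorem siegel_disk_automorphism_left_inverse_general {n : ℕ}
    (x y : Matrix (Fin n) (Fin n) ℂ)
    (h1 : (1 - x * xᴴ).PosDef) (h2 : (1 - xᴴ * x).PosDef)
    (h4 : IsUnit (1 - xᴴ * y))
    (z : Matrix (Fin n) (Fin n) ℂ)
    (hz : z = (h1.posSemidef.sqrt)⁻¹ * (y - x) * (1 - xᴴ * y)⁻¹ * h2.posSemidef.sqrt) :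
    y = (h1.posSemidef.sqrt)⁻¹ * (z + x) * (1 + xᴴ * z)⁻¹ * h2.posSemidef.sqrt := by
  have hAx : h1.posSemidef.sqrt * x = x * h2.posSemidef.sqrt :=
    PosSemidef.sqrt_mul_eq_mul_sqrt _ _ (by noncomm_ring)
  have hBx : h2.posSemidef.sqrt * xᴴ = xᴴ * h1.posSemidef.sqrt :=
    PosSemidef.sqrt_mul_eq_mul_sqrt _ _ (by noncomm_ring)
  have key := siegelMap_neg_siegelMap h1.isUnit_sqrt h2.isUnit_sqrt
    (PosSemidef.sqrt_mul_self _) (PosSemidef.sqrt_mul_self _) hAx hBx h4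
  simp only [siegelMap, sub_neg_eq_add, neg_mul, ← nonsing_inv_eq_ringInverse, ← hz] at key
  exact key.symm

/-- Final identity in the proof of Proposition 6.2: `φ_{-x}(φ_x(y)) = y`, i.e. with
`z = φ_x(y)` and `I + xᴴ z` invertible,
`y = (I - x xᴴ)^{-1/2} (z + x) (I + xᴴ z)⁻¹ (I - xᴴ x)^{1/2}`. -/
theorem siegel_disk_automorphism_left_inverse {n : ℕ} (hn : 0 < n)
    (x y : Matrix (Fin n) (Fin n) ℂ)
    (hxs : xᵀ = x) (hys : yᵀ = y)
    (h1 : (1 - x * xᴴ).PosDef) (h2 : (1 - xᴴ * x).PosDef)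
    (h4 : IsUnit (1 - xᴴ * y))
    (z : Matrix (Fin n) (Fin n) ℂ)
    (hz : z = (h1.posSemidef.sqrt)⁻¹ * (y - x) * (1 - xᴴ * y)⁻¹ * h2.posSemidef.sqrt)
    (hzu : IsUnit (1 + xᴴ * z)) :
    y = (h1.posSemidef.sqrt)⁻¹ * (z + x) * (1 + xᴴ * z)⁻¹ * h2.posSemidef.sqrt :=
  siegel_disk_automorphism_left_inverse_general x y h1 h2 h4 z hz
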